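/- Let (A, a) be a 3CNF system over n ≥ 1 variables. The infimum of the objective of PV(A, a) over its feasible set equals −∞ if (A, a) has a satisfying assignment, and equals 0 otherwise. -/
import Mathlib

noncomputable section

/-- The set of minimizers of `g` over `S`. -/
def argminOn {α : Type} (g : α → ℝ) (S : Set α) : Set α :=
  {x ∈ S | ∀ y ∈ S, g x ≤ g y}

/-- `(A, a)` is a 3CNF system. -/
def Is3CNF {n p : ℕ} (A : Matrix (Fin p) (Fin n) ℤ) (a : Fin p → ℤ) : Prop :=
  ∃ P N : Matrix (Fin p) (Fin n) ℤ,
    (∀ j i, 0 ≤ P j i) ∧ (∀ j i, 0 ≤ N j i) ∧ A = P - N ∧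
    (∀ j, a j = ∑ i, N j i) ∧ (∀ j, (∑ i, (P j i + N j i)) = 3)

/-- `(A, a)` has a satisfying assignment. -/
def SatAssign {n p : ℕ} (A : Matrix (Fin p) (Fin n) ℤ) (a : Fin p → ℤ) : Prop :=
  ∃ μ : Fin n → ℤ, (∀ i, μ i = 0 ∨ μ i = 1) ∧ ∀ j, 1 - a j ≤ ∑ i, A j i * μ i

/-- The feasible set of the bilevel program `PV(A, a)`: triples `(x, y, w)`. -/
def FPV {n p : ℕ} (A : Matrix (Fin p) (Fin n) ℤ) (a : Fin p → ℤ) :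
    Set ((Fin n → ℝ) × ℝ × (Fin n → ℝ)) :=
  {q | (∀ j, 3 / 2 - q.2.1 / 2 - (a j : ℝ) ≤ ∑ i, (A j i : ℝ) * q.1 i) ∧
       (∀ i, 1 / 2 - q.2.1 / 2 ≤ q.1 i ∧ q.1 i ≤ 1 / 2 + q.2.1 / 2) ∧
       q.2.2 ∈ argminOn (fun w' => ∑ i, w' i)
         {w' : Fin n → ℝ | ∀ i, -(w' i) ≤ q.1 i - 1 / 2 ∧ q.1 i - 1 / 2 ≤ w' i}}

/-- The objective of `PV(A, a)`. -/
def objPV (n : ℕ) (q : (Fin n → ℝ) × ℝ × (Fin n → ℝ)) : ℝ :=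
  2 * ∑ i, (q.2.1 - 2 * q.2.2 i) - (2 / (n : ℝ)) * ∑ i, q.2.2 i

lemma fpv_w_eq {n p : ℕ} (A : Matrix (Fin p) (Fin n) ℤ) (a : Fin p → ℤ)
    {q : (Fin n → ℝ) × ℝ × (Fin n → ℝ)} (hq : q ∈ FPV A a) (i : Fin n) :
    q.2.2 i = |q.1 i - 1 / 2| := by
  obtain ⟨-, -, hfeas, hmin⟩ := hq
  have habs : ∀ k, |q.1 k - 1/2| ≤ q.2.2 k :=
    fun k => abs_le.2 ⟨(hfeas k).1, (hfeas k).2⟩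
  have hmem : (fun k => |q.1 k - 1/2|) ∈
      {w' : Fin n → ℝ | ∀ i, -(w' i) ≤ q.1 i - 1 / 2 ∧ q.1 i - 1 / 2 ≤ w' i} := by
    intro k
    exact ⟨by simpa using neg_abs_le (q.1 k - 1/2), le_abs_self _⟩
  have hsum := hmin _ hmem
  by_contra hne
  have hlt : |q.1 i - 1/2| < q.2.2 i := lt_of_le_of_ne (habs i) (fun h => hne h.symm)
  have : ∑ k, |q.1 k - 1/2| < ∑ k, q.2.2 k :=
    Finset.sum_lt_sum (fun k _ => habs k) ⟨i, Finset.mem_univ i, hlt⟩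
  simp only at hsum
  linarith

set_option maxHeartbeats 1600000

/-- for a 3CNF system `(A, a)` over `n ≥ 1` variables, the infimum of the
objective of `PV(A, a)` over its feasible set is `−∞` if `(A, a)` has a satisfying
assignment and `0` otherwise. -/
theorem stmt14 (n p : ℕ) (hn : 1 ≤ n)
    (A : Matrix (Fin p) (Fin n) ℤ) (a : Fin p → ℤ) (h3 : Is3CNF A a) :
    (SatAssign A a →
      sInf ((fun q => ((objPV n q : ℝ) : EReal)) '' FPV A a) = ⊥) ∧
    (¬SatAssign A a →
      sInf ((fun q => ((objPV n q : ℝ) : EReal)) '' FPV A a) = 0) := by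
  obtain ⟨P, N, hP, hN, hA, ha, h3s⟩ := h3
  have hc : (1:ℝ) ≤ (n:ℝ) := by exact_mod_cast hn
  have hn0 : (n:ℝ) ≠ 0 := by positivity
  have hrs : ∀ j, (∑ i, A j i) = 3 - 2 * a j := by
    intro j
    have h1 := h3s j
    have h2 := ha j
    rw [Finset.sum_add_distrib] at h1
    simp only [hA, Matrix.sub_apply]
    rw [Finset.sum_sub_distrib]
    omega
  have hra : ∀ j, (∑ i, |A j i|) ≤ 3 := by
    intro j
    calc ∑ i, |A j i| ≤ ∑ i, (P j i + N j i) := by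
          refine Finset.sum_le_sum (fun i _ => ?_)
          have h1 := hP j i
          have h2 := hN j i
          simp only [hA, Matrix.sub_apply]
          rw [abs_le]
          constructor <;> linarith
      _ = 3 := h3s j
  have castrow : ∀ j, (∑ i, (A j i : ℝ)) = 3 - 2 * (a j : ℝ) := by
    intro j
    exact_mod_cast congrArg (Int.cast : ℤ → ℝ) (hrs j)
  constructor
  · rintro ⟨μ, hμ01, hμs⟩
    have key : ∀ y : ℝ, 0 ≤ y →
        ((-y : ℝ) : EReal) ∈ ((fun q => ((objPV n q : ℝ) : EReal)) '' FPV A a) := by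
      intro y hy
      refine ⟨(fun i => 1/2 + y/2 * (2*(μ i : ℝ) - 1), y, fun _ => y/2), ⟨?_, ?_, ?_, ?_⟩, ?_⟩
      · intro j
        simp only
        have hzr : (1:ℝ) - (a j : ℝ) ≤ ∑ i, (A j i:ℝ) * (μ i:ℝ) := by
          exact_mod_cast hμs j
        have hexp : ∑ i, (A j i:ℝ) * (1/2 + y/2 * (2*(μ i : ℝ) - 1))
            = (∑ i, (A j i : ℝ))/2 + y * (∑ i, (A j i:ℝ) * (μ i:ℝ))
              - y/2 * (∑ i, (A j i:ℝ)) := by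
          rw [Finset.sum_congr rfl (fun i (_ : i ∈ Finset.univ) =>
            (by ring : (A j i:ℝ) * (1/2 + y/2 * (2*(μ i : ℝ) - 1))
              = (A j i:ℝ)/2 + y * ((A j i:ℝ) * (μ i:ℝ)) - y/2 * (A j i:ℝ))),
            Finset.sum_sub_distrib, Finset.sum_add_distrib, ← Finset.sum_div,
            ← Finset.mul_sum, ← Finset.mul_sum]
        rw [hexp, castrow j]
        nlinarith [mul_le_mul_of_nonneg_left hzr hy]
      · intro i
        simp only
        rcases hμ01 i with h | h <;> rw [h] <;> push_cast <;> constructor <;> nlinarith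
      · intro i
        simp only
        rcases hμ01 i with h | h <;> rw [h] <;> push_cast <;> constructor <;> nlinarith
      · intro w' hw'
        simp only
        have hpt : ∀ i, y/2 ≤ w' i := by
          intro i
          have h1 := (hw' i).1
          have h2 := (hw' i).2
          simp only at h1 h2
          rcases hμ01 i with h | h <;> rw [h] at h1 h2 <;> push_cast at h1 h2 <;> nlinarith
        exact Finset.sum_le_sum (fun i _ => hpt i)
      · have hval : objPV n (fun i => 1/2 + y/2 * (2*(μ i : ℝ) - 1), y, fun _ => y/2) = -y := by
          unfold objPV
          simp only [Finset.sum_const, Finset.card_univ, Fintype.card_fin, nsmul_eq_mul]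
          field_simp
          ring
        exact congrArg (fun r : ℝ => (r : EReal)) hval
    rw [sInf_eq_bot]
    intro b hb
    induction b using EReal.rec with
    | bot => exact absurd hb (lt_irrefl _)
    | coe r =>
        refine ⟨_, key (max 0 (1 - r)) (le_max_left _ _), ?_⟩
        rw [EReal.coe_lt_coe_iff]
        have := le_max_right 0 (1 - r)
        linarith
    | top =>
        exact ⟨_, key 0 le_rfl, by simpa using EReal.coe_lt_top (-0 : ℝ)⟩
  · intro hunsat
    have h0 : ((0:ℝ):EReal) ∈ ((fun q => ((objPV n q : ℝ) : EReal)) '' FPV A a) := by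
      refine ⟨(fun _ => 1/2, 0, fun _ => 0), ⟨?_, ?_, ?_, ?_⟩, ?_⟩
      · intro j
        simp only
        have : ∑ i, (A j i:ℝ) * (1/2) = (∑ i, (A j i:ℝ))/2 := by
          rw [Finset.sum_div]
          exact Finset.sum_congr rfl (fun i _ => by ring)
        rw [this, castrow j]
        linarith
      · intro i; norm_num
      · intro i; norm_num
      · intro w' hw'
        simp only [Finset.sum_const, smul_zero]
        exact Finset.sum_nonneg (fun i _ => by linarith [(hw' i).1, (hw' i).2])
      · have hval : objPV n ((fun _ => 1/2 : Fin n → ℝ), (0:ℝ), (fun _ => 0 : Fin n → ℝ)) = 0 := by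
          unfold objPV
          norm_num
        exact congrArg (fun r : ℝ => (r : EReal)) hval
    have hnonneg : ∀ q ∈ FPV A a, 0 ≤ objPV n q := by
      rintro ⟨x, y, w⟩ hq
      by_contra hneg
      push_neg at hneg
      apply hunsat
      have hw : ∀ i, w i = |x i - 1/2| := fpv_w_eq A a hq
      obtain ⟨hc1, hc2, -⟩ := hq
      simp only at hc1 hc2 hneg
      have hy0 : 0 ≤ y := by
        have h := hc2 ⟨0, hn⟩
        linarith [h.1, h.2]
      have hdle : ∀ i, |x i - 1/2| ≤ y/2 := fun i =>
        abs_le.2 ⟨by linarith [(hc2 i).1], by linarith [(hc2 i).2]⟩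
      set S := ∑ i, |x i - 1/2| with hSdef
      have hS0 : 0 ≤ S := Finset.sum_nonneg (fun i _ => abs_nonneg _)
      have hsumw : ∑ i, w i = S := Finset.sum_congr rfl (fun i _ => hw i)
      have hobj : objPV n (x,y,w) = 2*(n:ℝ)*y - 4*S - (2/(n:ℝ))*S := by
        unfold objPV
        simp only
        rw [Finset.sum_sub_distrib, Finset.sum_const, Finset.card_univ, Fintype.card_fin,
          nsmul_eq_mul, ← Finset.mul_sum, hsumw]
        ring
      rw [hobj] at hneg
      have hc0 : (0:ℝ) < (n:ℝ) := by linarith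
      have hne2 : 2*(n:ℝ)^2*y < (4*(n:ℝ)+2)*S := by
        have h := mul_lt_mul_of_pos_left hneg hc0
        have hdiv : (n:ℝ) * ((2/(n:ℝ))*S) = 2*S := by field_simp
        nlinarith [h, hdiv]
      have hSub : (2*(n:ℝ)-1)*y/4 < S := by
        nlinarith [hne2, hy0, hc, mul_nonneg hy0 (by linarith : (0:ℝ) ≤ 2)]
      have hdgt : ∀ i, y/4 < |x i - 1/2| := by
        intro i
        have hsplit : S = |x i - 1/2| + ∑ k ∈ Finset.univ.erase i, |x k - 1/2| :=
          (Finset.add_sum_erase _ _ (Finset.mem_univ i)).symm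
        have hrest : ∑ k ∈ Finset.univ.erase i, |x k - 1/2| ≤ ((n-1:ℕ):ℝ) * (y/2) := by
          have := Finset.sum_le_card_nsmul (Finset.univ.erase i)
            (fun k => |x k - 1/2|) (y/2) (fun k _ => hdle k)
          simpa [Finset.card_erase_of_mem, Finset.card_univ, nsmul_eq_mul] using this
        have hcard : ((n-1:ℕ):ℝ) = (n:ℝ) - 1 := by
          push_cast [Nat.cast_sub hn]
          ring
        rw [hcard] at hrest
        linarith
      have hypos : 0 < y := by
        have h1 := hdgt ⟨0, hn⟩
        have h2 := hdle ⟨0, hn⟩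
        linarith
      set μ : Fin n → ℤ := fun i => if 1/2 < x i then 1 else 0 with hμdef
      have herr : ∀ i, |x i - 1/2 - y/2 * (2*(μ i:ℝ) - 1)| ≤ y/4 := by
        intro i
        by_cases h : 1/2 < x i
        · have hμi : μ i = 1 := by simp only [hμdef]; exact if_pos h
          rw [hμi]
          have h1 : y/4 < x i - 1/2 := by
            have := hdgt i
            rwa [abs_of_pos (by linarith)] at this
          have h2 : x i - 1/2 ≤ y/2 := by linarith [(hc2 i).2]
          rw [abs_le]
          push_cast
          constructor <;> linarith
        · have hμi : μ i = 0 := by simp only [hμdef]; exact if_neg h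
          rw [hμi]
          push_neg at h
          have h1 : y/4 < -(x i - 1/2) := by
            have := hdgt i
            rwa [abs_of_nonpos (by linarith)] at this
          have h2 : 1/2 - y/2 ≤ x i := (hc2 i).1
          rw [abs_le]
          push_cast
          constructor <;> linarith
      refine ⟨μ, fun i => ?_, fun j => ?_⟩
      · by_cases h : 1/2 < x i
        · exact Or.inr (by simp only [hμdef]; exact if_pos h)
        · exact Or.inl (by simp only [hμdef]; exact if_neg h)
      · have hAx := hc1 j
        set z : ℤ := ∑ i, A j i * (2*μ i - 1) with hzdef
        have hzr : ((z:ℤ):ℝ) = ∑ i, (A j i:ℝ) * (2*(μ i:ℝ)-1) := by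
          rw [hzdef]
          push_cast
          rfl
        have hde : ∑ i, (A j i:ℝ) * x i
            = (∑ i, (A j i:ℝ))/2 + y/2 * (∑ i, (A j i:ℝ) * (2*(μ i:ℝ)-1))
              + ∑ i, (A j i:ℝ) * (x i - 1/2 - y/2*(2*(μ i:ℝ)-1)) := by
          rw [Finset.sum_congr rfl (fun i (_ : i ∈ Finset.univ) =>
            (by ring : (A j i:ℝ) * x i
              = (A j i:ℝ)/2 + y/2*((A j i:ℝ)*(2*(μ i:ℝ)-1))
                + (A j i:ℝ)*(x i - 1/2 - y/2*(2*(μ i:ℝ)-1)))),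
            Finset.sum_add_distrib, Finset.sum_add_distrib, ← Finset.sum_div, ← Finset.mul_sum]
        have habs3 : (∑ i, |(A j i:ℝ)|) ≤ 3 := by exact_mod_cast hra j
        have hE : |∑ i, (A j i:ℝ) * (x i - 1/2 - y/2*(2*(μ i:ℝ)-1))| ≤ 3*(y/4) := by
          calc |∑ i, (A j i:ℝ) * (x i - 1/2 - y/2*(2*(μ i:ℝ)-1))|
              ≤ ∑ i, |(A j i:ℝ) * (x i - 1/2 - y/2*(2*(μ i:ℝ)-1))| :=
                Finset.abs_sum_le_sum_abs _ _
            _ = ∑ i, |(A j i:ℝ)| * |x i - 1/2 - y/2*(2*(μ i:ℝ)-1)| :=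
                Finset.sum_congr rfl (fun i _ => abs_mul _ _)
            _ ≤ ∑ i, |(A j i:ℝ)| * (y/4) :=
                Finset.sum_le_sum (fun i _ =>
                  mul_le_mul_of_nonneg_left (herr i) (abs_nonneg _))
            _ = (∑ i, |(A j i:ℝ)|) * (y/4) := (Finset.sum_mul _ _ _).symm
            _ ≤ 3 * (y/4) := mul_le_mul_of_nonneg_right habs3 (by linarith)
        have hEl : -(3*(y/4)) ≤ ∑ i, (A j i:ℝ) * (x i - 1/2 - y/2*(2*(μ i:ℝ)-1)) :=
          neg_le_of_abs_le hE
        have hEu : ∑ i, (A j i:ℝ) * (x i - 1/2 - y/2*(2*(μ i:ℝ)-1)) ≤ 3*(y/4) :=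
          le_of_abs_le hE
        rw [hde, castrow j, ← hzr] at hAx
        have hzge : (-5:ℝ)/2 ≤ ((z:ℤ):ℝ) := by
          by_contra hcon
          push_neg at hcon
          have hmul : y/2 * ((z:ℤ):ℝ) < y/2 * ((-5:ℝ)/2) :=
            mul_lt_mul_of_pos_left hcon (by linarith)
          linarith
        have hzint : -2 ≤ z := by
          by_contra hcon
          push_neg at hcon
          have h3 : z ≤ -3 := by omega
          have h3r : ((z:ℤ):ℝ) ≤ -3 := by exact_mod_cast h3
          linarith
        have hzeq : z = 2*(∑ i, A j i * μ i) - (3 - 2*a j) := by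
          rw [hzdef, ← hrs j, Finset.mul_sum, ← Finset.sum_sub_distrib]
          exact Finset.sum_congr rfl (fun i _ => by ring)
        omega
    apply le_antisymm
    · simpa using sInf_le h0
    · apply le_sInf
      rintro b ⟨q, hq, rfl⟩
      simp only
      exact EReal.coe_nonneg.2 (hnonneg q hq)
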